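/- Let n ≥ k ≥ 1 and let Q ∈ ℂ^{n×n} be the cyclic shift matrix. For each j = 1,…,k let α_j ∈ ℂ, let x_j ∈ ℂ^n be such that (Q x_j)(i) = 0 for every i > n − j + 1 (i.e. Q x_j has j−1 trailing zeros), set y_j = α_j e_n, and define S_j = Q(I_n + x_j y_j^T). Then for every j ∈ {1,…,k}: S_1 S_2 ⋯ S_{j−1} (Q x_j) = Q^j x_j and y_j^T S_{j+1} ⋯ S_k = y_j^T Q^{k−j} (with empty products interpreted as the identity). -/

import Mathlib

/-!
`Q` is the permutation matrix of the rotation `i ↦ i + 1` of `Fin n`, so `Q v` is `v` moved down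
by one place and `e_pᵀ Q = e_{p-1}ᵀ`. Since `y_t = α_t e_n`, the factor `S_t = Q (I + x_t y_tᵀ)`
agrees with `Q` on every vector with a vanishing last entry; as `Q x_j` has `j - 1` trailing
zeros and each application of `Q` uses up one of them, `S_1 ⋯ S_{j-1}` acts on it as `Q^{j-1}`.
Dually, `e_pᵀ S_t = e_pᵀ Q` whenever `(Q x_t)_p = 0`, and the trailing zeros of the `Q x_t` are
exactly what is needed along the path `e_n, e_{n-1}, …` traced by `y_jᵀ S_{j+1} ⋯ S_k`.
-/

open Matrix

noncomputable section

/-- The `n × n` cyclic shift matrix `Q`: `Q e_i = e_{i+1}` for `i < n`, `Q e_n = e_1`. -/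
def cyclicShift (n : ℕ) : Matrix (Fin n) (Fin n) ℂ :=
  fun p q => if (p : ℕ) = ((q : ℕ) + 1) % n then 1 else 0

/-- The factor `S_j = Q (I + x_j y_jᵀ)` of the Frobenius factorization, with
`y_j = α_j e_n` (here `t` is the 0-based index of the factor). -/
def frobFactor (n k : ℕ) (hn : 0 < n) (α : Fin k → ℂ) (x : Fin k → Fin n → ℂ)
    (t : Fin k) : Matrix (Fin n) (Fin n) ℂ :=
  cyclicShift n *
    (1 + vecMulVec (x t) (α t • (Pi.single (⟨n - 1, by omega⟩ : Fin n) 1 : Fin n → ℂ)))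

section LowRankUpdate

variable {ι R : Type*} [Fintype ι] [DecidableEq ι] [CommRing R]

theorem mul_one_add_vecMulVec_mulVec_of_dotProduct_eq_zero (M : Matrix ι ι R) {x y v : ι → R}
    (h : y ⬝ᵥ v = 0) : (M * (1 + vecMulVec x y)) *ᵥ v = M *ᵥ v := by
  rw [← mulVec_mulVec, add_mulVec, one_mulVec, vecMulVec_mulVec, h]
  simp

theorem vecMul_mul_one_add_vecMulVec_of_dotProduct_eq_zero (M : Matrix ι ι R) {x y u : ι → R}
    (h : u ⬝ᵥ (M *ᵥ x) = 0) : u ᵥ* (M * (1 + vecMulVec x y)) = u ᵥ* M := by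
  rw [← vecMul_vecMul, vecMul_add, vecMul_one, vecMul_vecMulVec, ← dotProduct_mulVec, h,
    zero_smul, add_zero]

end LowRankUpdate

theorem cyclicShift_eq_permMatrix (n : ℕ) :
    cyclicShift n = Equiv.Perm.permMatrix ℂ (finRotate n).symm := by
  ext p q
  rcases n with _ | n
  · exact p.elim0
  have : (p : ℕ) = (q + 1) % (n + 1) ↔ (finRotate (n + 1)).symm p = q := by
    rw [Equiv.symm_apply_eq, finRotate_apply, Fin.ext_iff, Fin.val_add, Fin.val_one',
      Nat.add_mod_mod]
  simp only [cyclicShift, PEquiv.toMatrix_apply, Equiv.toPEquiv_apply, Option.mem_def,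
    Option.some_inj, this]

theorem cyclicShift_mulVec_eq_comp (n : ℕ) (v : Fin n → ℂ) :
    cyclicShift n *ᵥ v = v ∘ (finRotate n).symm := by
  rw [cyclicShift_eq_permMatrix, permMatrix_mulVec]

theorem vecMul_cyclicShift_eq_comp (n : ℕ) (u : Fin n → ℂ) :
    u ᵥ* cyclicShift n = u ∘ finRotate n := by
  rw [cyclicShift_eq_permMatrix, vecMul_permMatrix, Equiv.symm_symm]

theorem single_vecMul_cyclicShift {n : ℕ} (p : Fin n) :
    Pi.single p 1 ᵥ* cyclicShift n = Pi.single ((finRotate n).symm p) 1 := by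
  rw [vecMul_cyclicShift_eq_comp, Pi.single_comp_equiv]

theorem val_le_val_finRotate_symm_add_one {n : ℕ} (i : Fin n) :
    (i : ℕ) ≤ (finRotate n).symm i + 1 := by
  rcases n with _ | n
  · exact i.elim0
  have := coe_finRotate ((finRotate (n + 1)).symm i)
  rw [Equiv.apply_symm_apply] at this
  split_ifs at this <;> omega

def HasTrailingZeros {R : Type*} [Zero R] {n : ℕ} (m : ℕ) (v : Fin n → R) : Prop :=
  ∀ i : Fin n, n ≤ (i : ℕ) + m → v i = 0

theorem HasTrailingZeros.cyclicShift_mulVec {n m : ℕ} {v : Fin n → ℂ}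
    (hv : HasTrailingZeros (m + 1) v) : HasTrailingZeros m (cyclicShift n *ᵥ v) := by
  intro i hi
  rw [cyclicShift_mulVec_eq_comp, Function.comp_apply]
  exact hv _ (by have := val_le_val_finRotate_symm_add_one i; omega)

theorem prod_mulVec_eq_cyclicShift_pow_mulVec {n : ℕ} (L : List (Matrix (Fin n) (Fin n) ℂ))
    (hL : ∀ A ∈ L, ∀ w, HasTrailingZeros 1 w → A *ᵥ w = cyclicShift n *ᵥ w)
    {v : Fin n → ℂ} (hv : HasTrailingZeros L.length v) :
    L.prod *ᵥ v = cyclicShift n ^ L.length *ᵥ v := by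
  induction L using List.reverseRecOn generalizing v with
  | nil => simp
  | append_singleton L A ih =>
    replace hv : HasTrailingZeros (L.length + 1) v := by simpa using hv
    have hA : A *ᵥ v = cyclicShift n *ᵥ v := hL A (by simp) v fun i hi => hv i (by omega)
    rw [List.prod_append, List.prod_singleton, ← mulVec_mulVec, hA, List.length_append,
      List.length_singleton, pow_succ, ← mulVec_mulVec,
      ih (fun B hB => hL B (by simp [hB])) hv.cyclicShift_mulVec]

section FrobeniusFactor

variable {n k : ℕ} (hn : 0 < n) (α : Fin k → ℂ) (x : Fin k → Fin n → ℂ)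

theorem frobFactor_mulVec_of_hasTrailingZeros (t : Fin k) {v : Fin n → ℂ}
    (hv : HasTrailingZeros 1 v) : frobFactor n k hn α x t *ᵥ v = cyclicShift n *ᵥ v := by
  refine mul_one_add_vecMulVec_mulVec_of_dotProduct_eq_zero _ ?_
  rw [smul_dotProduct, single_dotProduct, hv _ (by simp; omega), mul_zero, smul_zero]

theorem single_vecMul_frobFactor {t : Fin k} {p : Fin n}
    (h : (cyclicShift n *ᵥ x t) p = 0) :
    Pi.single p 1 ᵥ* frobFactor n k hn α x t = Pi.single ((finRotate n).symm p) 1 := by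
  rw [frobFactor, vecMul_mul_one_add_vecMulVec_of_dotProduct_eq_zero _
    (by rw [single_dotProduct, h, mul_zero]), single_vecMul_cyclicShift]

theorem single_vecMul_prod_drop_frobFactor
    (hx : ∀ (j : Fin k) (i : Fin n), n ≤ (i : ℕ) + j → (cyclicShift n *ᵥ x j) i = 0)
    {m : ℕ} {p : Fin n} (hp : n ≤ (p : ℕ) + m) :
    Pi.single p 1 ᵥ* (((List.finRange k).drop m).map (frobFactor n k hn α x)).prod
      = Pi.single p 1 ᵥ* cyclicShift n ^ (k - m) := by
  induction hd : k - m generalizing m p with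
  | zero => rw [List.drop_eq_nil_of_le (by simp; omega)]; simp
  | succ d ih =>
    have hm : m < (List.finRange k).length := by simp; omega
    have hp' : n ≤ ((finRotate n).symm p : ℕ) + (m + 1) := by
      have := val_le_val_finRotate_symm_add_one p
      omega
    rw [List.drop_eq_getElem_cons hm, List.map_cons, List.prod_cons, ← vecMul_vecMul,
      List.getElem_finRange, single_vecMul_frobFactor hn α x (hx _ p hp), ih hp' (by omega),
      pow_succ', ← vecMul_vecMul, single_vecMul_cyclicShift]

end FrobeniusFactor

/-- For the Frobenius factorization: `S₁ ⋯ S_{j−1} (Q x_j) = Q^j x_j` and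
`y_jᵀ S_{j+1} ⋯ S_k = y_jᵀ Q^{k−j}`. -/
theorem frobenius_factors_shift_vectors (n k : ℕ) (hk : 1 ≤ k) (hkn : k ≤ n)
    (α : Fin k → ℂ) (x : Fin k → Fin n → ℂ)
    (hx : ∀ (j : Fin k) (i : Fin n), n ≤ (i : ℕ) + (j : ℕ) →
      (cyclicShift n).mulVec (x j) i = 0) :
    ∀ j : Fin k,
      ((((List.finRange k).take (j : ℕ)).map
          (frobFactor n k (by omega) α x)).prod).mulVec ((cyclicShift n).mulVec (x j))
        = ((cyclicShift n) ^ ((j : ℕ) + 1)).mulVec (x j) ∧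
      Matrix.vecMul (α j • (Pi.single (⟨n - 1, by omega⟩ : Fin n) 1 : Fin n → ℂ))
          ((((List.finRange k).drop ((j : ℕ) + 1)).map
            (frobFactor n k (by omega) α x)).prod)
        = Matrix.vecMul (α j • (Pi.single (⟨n - 1, by omega⟩ : Fin n) 1 : Fin n → ℂ))
            ((cyclicShift n) ^ (k - 1 - (j : ℕ))) := by
  have hn : 0 < n := by omega
  intro j
  constructor
  · have hlen : (((List.finRange k).take j).map (frobFactor n k hn α x)).length = j := by
      simp [j.isLt.le]
    rw [prod_mulVec_eq_cyclicShift_pow_mulVec _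
        (List.forall_mem_map.2 fun t _ _ => frobFactor_mulVec_of_hasTrailingZeros hn α x t)
        (by rw [hlen]; exact hx j),
      hlen, pow_succ, mulVec_mulVec]
  · rw [smul_vecMul, smul_vecMul, single_vecMul_prod_drop_frobFactor hn α x hx (by simp; omega),
      show k - (j + 1) = k - 1 - j by omega]

end
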